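/- arXiv:2107.06358 — 2 statements merged into one kernel-verified Lean document; each statement's English description precedes it below -/
import Mathlib

section
/- Let K be an algebraically closed field complete with respect to a non-trivial non-archimedean absolute value, of residue characteristic 0 or > 3, and let p, q ∈ K with |p| < |q| < 1. With D = 1 − 2p + 4pq, α = (1−2p+q+2pq)/D, β = 1/2 + p, γ = 1 + q, both roots c± of the quadratic (z − (α+β−1/2))² = (α+β−1/2)² − 2αβγ satisfy |c± − 1| = |q| < 1. -/
/-- In a nonarchimedean normed field, adding a strictly smaller element preserves the norm. -/
lemma na_add_eq_left {K : Type*} [NormedField K] (hna : IsNonarchimedean (norm : K → ℝ))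
    {a b : K} (h : ‖b‖ < ‖a‖) : ‖a + b‖ = ‖a‖ := by
  refine le_antisymm ((hna a b).trans (max_le le_rfl h.le)) ?_
  by_contra hlt
  push_neg at hlt
  have h2 := hna (a + b) (-b)
  simp only [add_neg_cancel_right, norm_neg] at h2
  exact absurd h2 (not_le.2 (max_lt hlt h))

/-- Case 1: for |p| < |q| < 1, both remaining critical points c± satisfy |c± - 1| = |q| < 1. -/
theorem stmt10 {K : Type*} [NormedField K] [IsAlgClosed K] [CompleteSpace K]
    (hna : IsNonarchimedean (norm : K → ℝ))
    (hnt : ∃ x : K, x ≠ 0 ∧ ‖x‖ ≠ 1)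
    (h2 : ‖(2 : K)‖ = 1) (h3 : ‖(3 : K)‖ = 1)
    (p q : K) (hpq : ‖p‖ < ‖q‖) (hq : ‖q‖ < 1)
    (D β γ α : K)
    (hD : D = 1 - 2 * p + 4 * p * q)
    (hβ : β = 1 / 2 + p)
    (hγ : γ = 1 + q)
    (hα : α = (1 - 2 * p + q + 2 * p * q) / D) :
    ∀ c : K, (c - (α + β - 1 / 2)) ^ 2 = (α + β - 1 / 2) ^ 2 - 2 * α * β * γ →
      ‖c - 1‖ = ‖q‖ ∧ ‖q‖ < 1 := by
  intro c hc
  refine ⟨?_, hq⟩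
  have hp1 : ‖p‖ < 1 := hpq.trans hq
  have hq0 : 0 < ‖q‖ := lt_of_le_of_lt (norm_nonneg p) hpq
  have hn2p : ‖2 * p‖ = ‖p‖ := by rw [norm_mul, h2, one_mul]
  have h20 : (2 : K) ≠ 0 := by
    intro h; rw [h, norm_zero] at h2; norm_num at h2
  have h4 : ‖(4 : K)‖ = 1 := by
    have : (4 : K) = 2 * 2 := by norm_num
    rw [this, norm_mul, h2, one_mul]
  -- ‖1 - 2p‖ = 1
  have h1m2p : ‖1 - 2 * p‖ = 1 := by
    have he : (1 : K) - 2 * p = 1 + (-(2 * p)) := by ring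
    rw [he, na_add_eq_left hna, norm_one]
    rw [norm_neg, hn2p, norm_one]; exact hp1
  have h1p2p : ‖1 + 2 * p‖ = 1 := by
    rw [na_add_eq_left hna, norm_one]
    rw [hn2p, norm_one]; exact hp1
  -- ‖D‖ = 1
  have hDnorm : ‖D‖ = 1 := by
    have he : D = 1 + (-(2 * p) + 4 * p * q) := by rw [hD]; ring
    rw [he, na_add_eq_left hna, norm_one]
    rw [norm_one]
    refine lt_of_le_of_lt (hna _ _) (max_lt ?_ ?_)
    · rw [norm_neg, hn2p]; exact hp1
    · have he2 : ‖4 * p * q‖ = ‖p‖ * ‖q‖ := by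
        rw [norm_mul, norm_mul, h4, one_mul]
      rw [he2]
      nlinarith [norm_nonneg p, norm_nonneg q]
  have hD0 : D ≠ 0 := by
    intro h; rw [h, norm_zero] at hDnorm; norm_num at hDnorm
  have hD0' : (1 : K) - 2 * p + 4 * p * q ≠ 0 := hD ▸ hD0
  -- ‖α - 1‖ = ‖q‖
  have hα1eq : α - 1 = q * (1 - 2 * p) / D := by
    rw [hα]
    field_simp
    rw [hD]; ring
  have hα1 : ‖α - 1‖ = ‖q‖ := by
    rw [hα1eq, norm_div, norm_mul, h1m2p, hDnorm]
    simp
  -- the shifted linear coefficient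
  have hs1eq : α + β - 1 / 2 - 1 = (α - 1) + p := by rw [hβ]; ring
  have hs1 : ‖α + β - 1 / 2 - 1‖ = ‖q‖ := by
    rw [hs1eq, na_add_eq_left hna (by rw [hα1]; exact hpq), hα1]
  -- the constant term T
  have hTeq : 2 * (α + β - 1 / 2) - 1 - 2 * α * β * γ
      = -(q * (4 * p * (1 - 2 * p) + q * (1 + 2 * p) ^ 2)) / D := by
    rw [hα, hβ, hγ]
    field_simp
    rw [hD]; ring
  have hbig : ‖q * (1 + 2 * p) ^ 2‖ = ‖q‖ := by
    rw [norm_mul, norm_pow, h1p2p, one_pow, mul_one]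
  have hsmall : ‖4 * p * (1 - 2 * p)‖ < ‖q * (1 + 2 * p) ^ 2‖ := by
    rw [hbig, norm_mul, norm_mul, h4, one_mul, h1m2p, mul_one]
    exact hpq
  have hinner : ‖4 * p * (1 - 2 * p) + q * (1 + 2 * p) ^ 2‖ = ‖q‖ := by
    rw [add_comm, na_add_eq_left hna hsmall, hbig]
  have hT : ‖2 * (α + β - 1 / 2) - 1 - 2 * α * β * γ‖ = ‖q‖ ^ 2 := by
    rw [hTeq, norm_div, norm_neg, norm_mul, hinner, hDnorm, div_one, sq]
  -- the quadratic relation for u = c - 1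
  have hu : (c - 1) ^ 2 = 2 * (α + β - 1 / 2 - 1) * (c - 1)
      + (2 * (α + β - 1 / 2) - 1 - 2 * α * β * γ) := by
    linear_combination hc
  set u : K := c - 1 with hudef
  rcases lt_trichotomy ‖u‖ ‖q‖ with hlt | heq | hgt
  · exfalso
    have hTval : 2 * (α + β - 1 / 2) - 1 - 2 * α * β * γ
        = u ^ 2 + (-(2 * (α + β - 1 / 2 - 1) * u)) := by
      linear_combination -hu
    have hcontra : ‖q‖ ^ 2 < ‖q‖ ^ 2 := by
      calc ‖q‖ ^ 2 = ‖2 * (α + β - 1 / 2) - 1 - 2 * α * β * γ‖ := hT.symm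
        _ ≤ max ‖u ^ 2‖ ‖-(2 * (α + β - 1 / 2 - 1) * u)‖ := by rw [hTval]; exact hna _ _
        _ < ‖q‖ ^ 2 := by
            apply max_lt
            · rw [norm_pow]
              exact pow_lt_pow_left₀ hlt (norm_nonneg u) (by norm_num)
            · rw [norm_neg, norm_mul, norm_mul, h2, one_mul, hs1, sq]
              exact mul_lt_mul_of_pos_left hlt hq0
    exact absurd hcontra (lt_irrefl _)
  · exact heq
  · exfalso
    have hu0 : 0 < ‖u‖ := hq0.trans hgt
    have hcontra : ‖u‖ ^ 2 < ‖u‖ ^ 2 := by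
      calc ‖u‖ ^ 2 = ‖u ^ 2‖ := (norm_pow u 2).symm
        _ ≤ max ‖2 * (α + β - 1 / 2 - 1) * u‖ ‖2 * (α + β - 1 / 2) - 1 - 2 * α * β * γ‖ := by
            rw [hu]; exact hna _ _
        _ < ‖u‖ ^ 2 := by
            apply max_lt
            · rw [norm_mul, norm_mul, h2, one_mul, hs1, sq]
              exact mul_lt_mul_of_pos_right hgt hu0
            · rw [hT]
              exact pow_lt_pow_left₀ hgt (norm_nonneg q) (by norm_num)
    exact absurd hcontra (lt_irrefl _)
end

section
/- Let K be an algebraically closed field complete with respect to a non-trivial non-archimedean absolute value, of residue characteristic 0 or > 3, and let p, q ∈ K with 0 < |p| = |q| < 1 and |p − 2q| < |p|. With D = 1 − 2p + 4pq, α = (1−2p+q+2pq)/D, β = 1/2 + p, γ = 1 + q, both roots c± of the quadratic (z − (α+β−1/2))² = (α+β−1/2)² − 2αβγ satisfy |1 − c±| = |p|. -/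
lemma na_add_left {K : Type*} [NormedField K]
    (hna : IsNonarchimedean (norm : K → ℝ)) {x y : K} (h : ‖y‖ < ‖x‖) :
    ‖x + y‖ = ‖x‖ := by
  have h1 : ‖x + y‖ ≤ ‖x‖ := (hna x y).trans (max_le le_rfl h.le)
  rcases lt_or_eq_of_le h1 with h2 | h2
  · exfalso
    have h3 : ‖x‖ ≤ max ‖x + y‖ ‖y‖ := by
      have := hna (x + y) (-y)
      simpa using this
    have := max_lt h2 h
    linarith
  · exact h2

/-- Case 4: for 0 < |p| = |q| < 1 and |p-2q| < |p|, both roots c± of the quadratic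
satisfy |1-c±| = |p|. -/
theorem stmt12 {K : Type*} [NormedField K] [IsAlgClosed K] [CompleteSpace K]
    (hna : IsNonarchimedean (norm : K → ℝ))
    (hnt : ∃ x : K, x ≠ 0 ∧ ‖x‖ ≠ 1)
    (h2 : ‖(2 : K)‖ = 1) (h3 : ‖(3 : K)‖ = 1)
    (p q : K) (hp0 : 0 < ‖p‖) (hpq : ‖p‖ = ‖q‖) (hq : ‖q‖ < 1)
    (hdiff : ‖p - 2 * q‖ < ‖p‖)
    (D β γ α : K)
    (hD : D = 1 - 2 * p + 4 * p * q)
    (hβ : β = 1 / 2 + p)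
    (hγ : γ = 1 + q)
    (hα : α = (1 - 2 * p + q + 2 * p * q) / D) :
    ∀ c : K, (c - (α + β - 1 / 2)) ^ 2 = (α + β - 1 / 2) ^ 2 - 2 * α * β * γ →
      ‖1 - c‖ = ‖p‖ := by
  intro c hc
  have hp1 : ‖p‖ < 1 := hpq ▸ hq
  have h4 : ‖(4 : K)‖ = 1 := by
    have e : (4 : K) = 2 * 2 := by norm_num
    rw [e, norm_mul, h2, mul_one]
  have h8 : ‖(8 : K)‖ = 1 := by
    have e : (8 : K) = 2 * 4 := by norm_num
    rw [e, norm_mul, h2, h4, mul_one]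
  have hadd : ∀ x y : K, ∀ a : ℝ, ‖x‖ < a → ‖y‖ < a → ‖x + y‖ < a := by
    intro x y a hx hy
    exact (hna x y).trans_lt (max_lt hx hy)
  have hsub : ∀ x y : K, ‖x - y‖ ≤ max ‖x‖ ‖y‖ := by
    intro x y
    have := hna x (-y)
    simpa [sub_eq_add_neg] using this
  -- ‖D‖ = 1
  have hD1 : ‖D‖ = 1 := by
    have e : D = 1 + (-(2 * p) + 4 * (p * q)) := by rw [hD]; ring
    rw [e, na_add_left hna, norm_one]
    rw [norm_one]
    apply hadd
    · rw [norm_neg, norm_mul, h2, one_mul]; exact hp1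
    · rw [norm_mul, norm_mul, h4, one_mul]
      nlinarith [norm_nonneg p, norm_nonneg q]
  have hD0 : D ≠ 0 := by
    intro h
    rw [h, norm_zero] at hD1
    norm_num at hD1
  have hαD : α * D = 1 - 2 * p + q + 2 * p * q := by
    rw [eq_div_iff hD0] at hα
    exact hα
  -- norm of S = 2 - 2p - 2α
  have hq0 : ‖q‖ = ‖p‖ := hpq.symm
  have hpp : ‖p‖ * ‖p‖ < ‖p‖ := by nlinarith
  have hpq' : ‖p‖ * ‖q‖ < ‖p‖ := by rw [hq0]; exact hpp
  have hS : ‖2 - 2 * p - 2 * α‖ = ‖p‖ := by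
    have e : D * (2 - 2 * p - 2 * α) =
        (-3) * p + ((p - 2 * q) + (4 * (p * q) + (4 * (p * p) + (-(8 * (p * (p * q))))))) := by
      rw [hD] at *
      linear_combination (-2 : K) * hαD
    have h1 : ‖(-3 : K) * p‖ = ‖p‖ := by
      rw [norm_mul, norm_neg, h3, one_mul]
    have htail : ‖(p - 2 * q) + (4 * (p * q) + (4 * (p * p) + (-(8 * (p * (p * q))))))‖ < ‖p‖ := by
      apply hadd _ _ _ hdiff
      apply hadd
      · rw [norm_mul, h4, one_mul, norm_mul]; exact hpq'
      apply hadd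
      · rw [norm_mul, h4, one_mul, norm_mul]; exact hpp
      · rw [norm_neg, norm_mul, h8, one_mul, norm_mul, norm_mul]
        nlinarith [norm_nonneg p, norm_nonneg q]
    have : ‖D * (2 - 2 * p - 2 * α)‖ = ‖p‖ := by
      rw [e, na_add_left hna (h1 ▸ htail), h1]
    rwa [norm_mul, hD1, one_mul] at this
  -- norm of P
  have h1m2p : ‖1 - 2 * p‖ = 1 := by
    have e : (1 : K) - 2 * p = 1 + (-(2 * p)) := by ring
    rw [e, na_add_left hna, norm_one]
    rw [norm_one, norm_neg, norm_mul, h2, one_mul]; exact hp1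
  have h1p2p : ‖1 + 2 * p‖ = 1 := by
    rw [na_add_left hna, norm_one]
    rw [norm_one, norm_mul, h2, one_mul]; exact hp1
  have h3m2p : ‖3 - 2 * p‖ = 1 := by
    have e : (3 : K) - 2 * p = 3 + (-(2 * p)) := by ring
    rw [e, na_add_left hna, h3]
    rw [h3, norm_neg, norm_mul, h2, one_mul]; exact hp1
  have hP : ‖1 - 2 * p - 2 * α + α * (1 + 2 * p) * (1 + q)‖ = ‖p‖ * ‖p‖ := by
    have e : 4 * (D * (1 - 2 * p - 2 * α + α * (1 + 2 * p) * (1 + q))) =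
        p ^ 2 * (3 - 2 * p) ^ 2 +
          ((-(8 * (p * (p - 2 * q)))) * (1 - 2 * p) +
            ((p - 2 * q) ^ 2 - 2 * (p * (p - 2 * q))) * (1 + 2 * p) ^ 2) := by
      rw [hD] at *
      linear_combination (4 * ((1 + 2 * p) * (1 + q) - 2)) * hαD
    have hmain : ‖p ^ 2 * (3 - 2 * p) ^ 2‖ = ‖p‖ * ‖p‖ := by
      rw [norm_mul, norm_pow, norm_pow, h3m2p, one_pow, mul_one, sq]
    have ht1 : ‖(-(8 * (p * (p - 2 * q)))) * (1 - 2 * p)‖ < ‖p‖ * ‖p‖ := by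
      rw [norm_mul, h1m2p, mul_one, norm_neg, norm_mul, h8, one_mul, norm_mul]
      exact mul_lt_mul_of_pos_left hdiff hp0
    have ht2 : ‖((p - 2 * q) ^ 2 - 2 * (p * (p - 2 * q))) * (1 + 2 * p) ^ 2‖ < ‖p‖ * ‖p‖ := by
      rw [norm_mul, norm_pow, h1p2p, one_pow, mul_one]
      refine (hsub _ _).trans_lt (max_lt ?_ ?_)
      · rw [norm_pow, sq]
        exact mul_lt_mul'' hdiff hdiff (norm_nonneg _) (norm_nonneg _)
      · rw [norm_mul, h2, one_mul, norm_mul]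
        exact mul_lt_mul_of_pos_left hdiff hp0
    have htail : ‖(-(8 * (p * (p - 2 * q)))) * (1 - 2 * p) +
        ((p - 2 * q) ^ 2 - 2 * (p * (p - 2 * q))) * (1 + 2 * p) ^ 2‖ < ‖p‖ * ‖p‖ :=
      hadd _ _ _ ht1 ht2
    have hDP : ‖4 * (D * (1 - 2 * p - 2 * α + α * (1 + 2 * p) * (1 + q)))‖ = ‖p‖ * ‖p‖ := by
      rw [e, na_add_left hna (hmain ▸ htail), hmain]
    rwa [norm_mul, norm_mul, h4, hD1, one_mul, one_mul] at hDP
  -- key quadratic for u = 1 - c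
  have key : (1 - c) ^ 2 = (2 - 2 * p - 2 * α) * (1 - c) -
      (1 - 2 * p - 2 * α + α * (1 + 2 * p) * (1 + q)) := by
    rw [hβ, hγ] at hc
    have hhalf : (1 / 2 : K) * 2 = 1 := by
      have h2ne : (2 : K) ≠ 0 := by
        intro h
        rw [h, norm_zero] at h2
        norm_num at h2
      field_simp
    linear_combination hc - (α + α * q) * hhalf
  set u : K := 1 - c with hu
  rcases lt_trichotomy ‖u‖ ‖p‖ with h | h | h
  · exfalso
    have hPe : (1 - 2 * p - 2 * α + α * (1 + 2 * p) * (1 + q)) =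
        (2 - 2 * p - 2 * α) * u - u ^ 2 := by linear_combination key
    have : ‖p‖ * ‖p‖ < ‖p‖ * ‖p‖ := by
      calc ‖p‖ * ‖p‖ = ‖(1 - 2 * p - 2 * α + α * (1 + 2 * p) * (1 + q))‖ := hP.symm
        _ ≤ max ‖(2 - 2 * p - 2 * α) * u‖ ‖u ^ 2‖ := hPe ▸ hsub _ _
        _ < ‖p‖ * ‖p‖ := by
            apply max_lt
            · rw [norm_mul, hS]
              exact mul_lt_mul_of_pos_left h hp0
            · rw [norm_pow, sq]
              exact mul_lt_mul'' h h (norm_nonneg _) (norm_nonneg _)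
    linarith
  · exact h
  · exfalso
    have hu0 : 0 < ‖u‖ := hp0.trans h
    have : ‖u‖ * ‖u‖ < ‖u‖ * ‖u‖ := by
      calc ‖u‖ * ‖u‖ = ‖u ^ 2‖ := by rw [norm_pow, sq]
        _ ≤ max ‖(2 - 2 * p - 2 * α) * u‖
              ‖(1 - 2 * p - 2 * α + α * (1 + 2 * p) * (1 + q))‖ := key ▸ hsub _ _
        _ < ‖u‖ * ‖u‖ := by
            apply max_lt
            · rw [norm_mul, hS]
              exact mul_lt_mul_of_pos_right h hu0
            · rw [hP]
              exact mul_lt_mul'' h h (norm_nonneg _) (norm_nonneg _)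
    linarith
end
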